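/- There is an absolute constant C > 0 such that for every integer k ≥ 12 and every real number t with |t| ≤ k^{2/3}, one has |Γ(k − 1/2 + it)| / Γ(k) ≤ C·exp(−t²/(2k))·k^{−1/2}. -/

import Mathlib

/-!
Write `z = x + it` with `x = k - 1/2`. The functional equation gives
`‖Γ(z)‖ ∏_{n<N} ‖z + n‖ = ‖Γ(z + N)‖ ≤ Γ(x + N) = Γ(x) ∏_{n<N} (x + n)`, and each factor
`(x + n)² / ‖z + n‖² = 1 / (1 + uₙ)`, with `uₙ = t² / (x + n)²`, is at most `exp (uₙ² - uₙ)`.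
Comparing `∑ (x + n)⁻²` with telescoping sums, `∑ uₙ ≥ t²/x - 1` as soon as `x + N ≥ t²`,
while `∑ uₙ² ≤ 1` because `t⁴ ≤ x²(x - 1)`, which is what `|t| ≤ k^{2/3}` buys. Hence
`‖Γ(z)‖ ≤ e Γ(x) exp(-t²/(2x))`, and log-convexity of `Γ` gives `Γ(k - 1/2) ≤ Γ(k) / √(k - 1)`.
-/

open Complex Real Finset

theorem Complex.norm_Gamma_le_Gamma_re {z : ℂ} (hz : 0 < z.re) :
    ‖Gamma z‖ ≤ Real.Gamma z.re := by
  rw [Gamma_eq_integral hz, Real.Gamma_eq_integral hz, GammaIntegral]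
  refine MeasureTheory.norm_integral_le_of_norm_le (Real.GammaIntegral_convergent hz) ?_
  filter_upwards [MeasureTheory.ae_restrict_mem measurableSet_Ioi] with x hx
  rw [norm_mul, norm_real, Real.norm_eq_abs, norm_cpow_eq_rpow_re_of_pos hx, sub_re, one_re,
    abs_of_nonneg (Real.exp_pos _).le]

theorem Complex.Gamma_add_nat_eq_prod_mul {z : ℂ} (hz : 0 < z.re) (N : ℕ) :
    Gamma (z + N) = (∏ n ∈ range N, (z + n)) * Gamma z := by
  induction N with
  | zero => simp
  | succ n ih =>
    have hne : z + n ≠ 0 := Complex.ne_zero_of_re_pos (by simp; positivity)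
    rw [Nat.cast_succ, ← add_assoc, Gamma_add_one _ hne, ih, prod_range_succ]
    ring

theorem Real.Gamma_add_nat_eq_prod_mul {x : ℝ} (hx : 0 < x) (N : ℕ) :
    Real.Gamma (x + N) = (∏ n ∈ range N, (x + n)) * Real.Gamma x := by
  induction N with
  | zero => simp
  | succ n ih =>
    rw [Nat.cast_succ, ← add_assoc, Real.Gamma_add_one (by positivity), ih, prod_range_succ]
    ring

theorem Complex.norm_Gamma_mul_prod_le {z : ℂ} (hz : 0 < z.re) (N : ℕ) :
    ‖Gamma z‖ * ∏ n ∈ range N, ‖z + n‖ ≤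
      Real.Gamma z.re * ∏ n ∈ range N, (z.re + n) := by
  calc ‖Gamma z‖ * ∏ n ∈ range N, ‖z + n‖ = ‖Gamma (z + N)‖ := by
        rw [Gamma_add_nat_eq_prod_mul hz, norm_mul, norm_prod, mul_comm]
    _ ≤ Real.Gamma (z + N).re := norm_Gamma_le_Gamma_re (by simp; positivity)
    _ = Real.Gamma z.re * ∏ n ∈ range N, (z.re + n) := by
        rw [add_re, natCast_re, Real.Gamma_add_nat_eq_prod_mul hz, mul_comm]

theorem Real.exp_sub_sq_le_one_add {u : ℝ} (hu : 0 ≤ u) : Real.exp (u - u ^ 2) ≤ 1 + u := by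
  rw [← Real.exp_log (by linarith : 0 < 1 + u), Real.exp_le_exp]
  refine le_trans ?_ (le_log_one_add_of_nonneg hu)
  rw [le_div_iff₀ (by linarith)]
  nlinarith [pow_nonneg hu 3]

theorem sq_le_sq_add_sq_mul_exp {a : ℝ} (ha : a ≠ 0) (t : ℝ) :
    a ^ 2 ≤ (a ^ 2 + t ^ 2) * Real.exp ((t ^ 2 / a ^ 2) ^ 2 - t ^ 2 / a ^ 2) := by
  have hu : 0 ≤ t ^ 2 / a ^ 2 := by positivity
  have hsum : a ^ 2 + t ^ 2 = a ^ 2 * (1 + t ^ 2 / a ^ 2) := by field_simp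
  rw [hsum, mul_assoc]
  refine le_mul_of_one_le_right (by positivity) ?_
  generalize t ^ 2 / a ^ 2 = u at hu ⊢
  calc 1 = Real.exp (u - u ^ 2) * Real.exp (u ^ 2 - u) := by rw [← Real.exp_add]; simp
    _ ≤ (1 + u) * Real.exp (u ^ 2 - u) := by gcongr; exact exp_sub_sq_le_one_add hu

theorem inv_sub_inv_add_one {b : ℝ} (hb : 0 < b) :
    b⁻¹ - (b + 1)⁻¹ = (b * (b + 1))⁻¹ := by
  field_simp
  ring

theorem inv_sub_inv_le_sum_range_inv_sq {a : ℝ} (ha : 0 < a) (N : ℕ) :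
    a⁻¹ - (a + N)⁻¹ ≤ ∑ n ∈ range N, ((a + n) ^ 2)⁻¹ := by
  have htel := sum_range_sub' (fun n : ℕ => (a + n)⁻¹) N
  simp only [Nat.cast_zero, add_zero] at htel
  rw [← htel]
  gcongr with n
  have hb : 0 < a + n := by positivity
  rw [Nat.cast_succ, ← add_assoc, inv_sub_inv_add_one hb, sq]
  exact inv_anti₀ (by positivity) (by nlinarith)

theorem sum_range_inv_sq_le {a : ℝ} (ha : 1 < a) (N : ℕ) :
    ∑ n ∈ range N, ((a + n) ^ 2)⁻¹ ≤ (a - 1)⁻¹ := by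
  have htel := sum_range_sub' (fun n : ℕ => (a - 1 + n)⁻¹) N
  simp only [Nat.cast_zero, add_zero] at htel
  calc ∑ n ∈ range N, ((a + n) ^ 2)⁻¹
      ≤ ∑ n ∈ range N, ((a - 1 + n)⁻¹ - (a - 1 + (n + 1 : ℕ))⁻¹) := by
        gcongr with n
        have hb : 0 < a - 1 + n := by have := n.cast_nonneg (α := ℝ); linarith
        rw [Nat.cast_succ, ← add_assoc, inv_sub_inv_add_one hb, sq]
        exact inv_anti₀ (by positivity) (by nlinarith)
    _ = (a - 1)⁻¹ - (a - 1 + N)⁻¹ := htel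
    _ ≤ (a - 1)⁻¹ :=
        sub_le_self _ (inv_nonneg.2 (by have := N.cast_nonneg (α := ℝ); linarith))

theorem sum_range_sq_sub_le {x t : ℝ} {N : ℕ} (hx : 1 < x) (ht : t ^ 4 ≤ x ^ 2 * (x - 1))
    (hN : t ^ 2 ≤ x + N) :
    ∑ n ∈ range N, ((t ^ 2 / (x + n) ^ 2) ^ 2 - t ^ 2 / (x + n) ^ 2) ≤ 2 - t ^ 2 / x := by
  set S := ∑ n ∈ range N, ((x + n) ^ 2)⁻¹
  have hx0 : 0 < x := by linarith
  have hsq : ∀ n ∈ range N,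
      (t ^ 2 / (x + n) ^ 2) ^ 2 ≤ t ^ 4 / x ^ 2 * ((x + n) ^ 2)⁻¹ := by
    intro n _
    calc (t ^ 2 / (x + n) ^ 2) ^ 2 = t ^ 4 / (x + n) ^ 2 * ((x + n) ^ 2)⁻¹ := by ring
      _ ≤ t ^ 4 / x ^ 2 * ((x + n) ^ 2)⁻¹ := by gcongr; simp
  have hquad : t ^ 4 / x ^ 2 * S ≤ 1 := by
    calc t ^ 4 / x ^ 2 * S ≤ t ^ 4 / x ^ 2 * (x - 1)⁻¹ := by
          gcongr; exact sum_range_inv_sq_le hx N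
      _ = t ^ 4 / (x ^ 2 * (x - 1)) := by rw [← div_eq_mul_inv, div_div]
      _ ≤ 1 := div_le_one_of_le₀ ht (by positivity)
  have hlin : t ^ 2 / x - 1 ≤ t ^ 2 * S := by
    calc t ^ 2 / x - 1 ≤ t ^ 2 * (x⁻¹ - (x + N)⁻¹) := by
          rw [mul_sub, ← div_eq_mul_inv, ← div_eq_mul_inv]
          have : t ^ 2 / (x + N) ≤ 1 := div_le_one_of_le₀ hN (by positivity)
          linarith
      _ ≤ t ^ 2 * S := by gcongr; exact inv_sub_inv_le_sum_range_inv_sq hx0 N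
  calc ∑ n ∈ range N, ((t ^ 2 / (x + n) ^ 2) ^ 2 - t ^ 2 / (x + n) ^ 2)
      ≤ ∑ n ∈ range N, (t ^ 4 / x ^ 2 * ((x + n) ^ 2)⁻¹ - t ^ 2 * ((x + n) ^ 2)⁻¹) := by
        gcongr with n hn
        · exact hsq n hn
        · exact (div_eq_mul_inv _ _).le
    _ = t ^ 4 / x ^ 2 * S - t ^ 2 * S := by rw [sum_sub_distrib, mul_sum, mul_sum]
    _ ≤ 2 - t ^ 2 / x := by linarith

theorem Complex.norm_Gamma_add_mul_I_le {x t : ℝ} (hx : 1 < x)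
    (ht : t ^ 4 ≤ x ^ 2 * (x - 1)) :
    ‖Gamma (x + t * I)‖ ≤ Real.Gamma x * Real.exp (1 - t ^ 2 / (2 * x)) := by
  obtain ⟨N, hN⟩ := exists_nat_ge (t ^ 2 - x)
  set z : ℂ := x + t * I
  have hzre : z.re = x := by simp [z]
  have hnorm : ∀ n : ℕ, ‖z + n‖ ^ 2 = (x + n) ^ 2 + t ^ 2 := by
    intro n
    rw [show z + n = ((x + n : ℝ) : ℂ) + t * I by push_cast [z]; ring, norm_add_mul_I,
      sq_sqrt (by positivity)]
  have hP : 0 < ∏ n ∈ range N, ‖z + n‖ ^ 2 := by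
    refine prod_pos fun n _ => ?_
    rw [hnorm]
    positivity
  have hshift : ‖Gamma z‖ ^ 2 * ∏ n ∈ range N, ‖z + n‖ ^ 2
      ≤ Real.Gamma x ^ 2 * ∏ n ∈ range N, (x + n) ^ 2 := by
    rw [prod_pow, prod_pow, ← mul_pow, ← mul_pow, ← hzre]
    exact pow_le_pow_left₀ (by positivity)
      (norm_Gamma_mul_prod_le (by rw [hzre]; linarith) N) 2
  have hterm : ∏ n ∈ range N, (x + n) ^ 2 ≤ (∏ n ∈ range N, ‖z + n‖ ^ 2) *
      Real.exp (∑ n ∈ range N, ((t ^ 2 / (x + n) ^ 2) ^ 2 - t ^ 2 / (x + n) ^ 2)) := by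
    rw [Real.exp_sum, ← prod_mul_distrib]
    gcongr with n
    rw [hnorm]
    exact sq_le_sq_add_sq_mul_exp (by positivity) t
  have hsum := sum_range_sq_sub_le hx ht (by linarith)
  refine le_of_pow_le_pow_left₀ two_ne_zero (by positivity) (le_of_mul_le_mul_right ?_ hP)
  calc ‖Gamma z‖ ^ 2 * ∏ n ∈ range N, ‖z + n‖ ^ 2
      ≤ Real.Gamma x ^ 2 * ((∏ n ∈ range N, ‖z + n‖ ^ 2) * Real.exp (2 - t ^ 2 / x)) := by
        refine hshift.trans ?_
        gcongr
        exact hterm.trans (by gcongr)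
    _ = (Real.Gamma x * Real.exp (1 - t ^ 2 / (2 * x))) ^ 2 *
          ∏ n ∈ range N, ‖z + n‖ ^ 2 := by
        rw [mul_pow, ← Real.exp_nat_mul]
        ring_nf

theorem Real.Gamma_sub_half_le {s : ℝ} (hs : 1 < s) :
    Real.Gamma (s - 1 / 2) ≤ Real.Gamma s / √(s - 1) := by
  have hconv := Real.Gamma_mul_add_mul_le_rpow_Gamma_mul_rpow_Gamma (s := s - 1) (t := s)
    (a := 1 / 2) (b := 1 / 2) (by linarith) (by linarith) one_half_pos one_half_pos (by norm_num)
  have hrec : Real.Gamma (s - 1) = Real.Gamma s / (s - 1) := by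
    rw [eq_div_iff (by linarith), mul_comm, ← Real.Gamma_add_one (by linarith), sub_add_cancel]
  rwa [show 1 / 2 * (s - 1) + 1 / 2 * s = s - 1 / 2 by ring, ← sqrt_eq_rpow, ← sqrt_eq_rpow,
    ← sqrt_mul (Real.Gamma_pos_of_pos (by linarith)).le, hrec, div_mul_eq_mul_div, ← sq,
    sqrt_div' _ (by linarith), sqrt_sq (Real.Gamma_pos_of_pos (by linarith)).le] at hconv

theorem pow_four_le_of_abs_le_rpow {K t : ℝ} (hK : 8 ≤ K) (ht : |t| ≤ K ^ ((2 : ℝ) / 3)) :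
    t ^ 4 ≤ K ^ 3 / 2 := by
  have hcube : |t| ^ 3 ≤ K ^ 2 := by
    calc |t| ^ 3 ≤ (K ^ ((2 : ℝ) / 3)) ^ 3 := pow_le_pow_left₀ (abs_nonneg t) ht 3
      _ = K ^ 2 := by rw [← rpow_natCast, ← rpow_mul (by linarith)]; norm_num
  have hK0 : 0 ≤ K := by linarith
  refine le_of_pow_le_pow_left₀ three_ne_zero (by positivity) ?_
  calc (t ^ 4) ^ 3 = (|t| ^ 3) ^ 4 := by
        rw [← pow_mul, ← pow_mul, (by decide : Even (3 * 4)).pow_abs]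
    _ ≤ (K ^ 2) ^ 4 := by gcongr
    _ ≤ (K ^ 3 / 2) ^ 3 := by nlinarith [mul_nonneg (pow_nonneg hK0 8) (sub_nonneg.2 hK)]

theorem inv_sqrt_sub_one_le {s : ℝ} (hs : 2 ≤ s) :
    (√(s - 1))⁻¹ ≤ √2 * s ^ (-(1 : ℝ) / 2) := by
  rw [neg_div, rpow_neg (by linarith), ← sqrt_eq_rpow, ← div_eq_mul_inv, ← inv_div,
    ← sqrt_div' _ (by norm_num)]
  exact inv_anti₀ (by positivity) (sqrt_le_sqrt (by linarith))

/-- For `|t| ≤ k^{2/3}`, one has `|Γ(k − 1/2 + it)| / Γ(k) ≤ C exp(−t²/(2k)) k^{−1/2}`. -/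
theorem gamma_ratio_small_t :
    ∃ C : ℝ, 0 < C ∧ ∀ (k : ℤ), 12 ≤ k → ∀ t : ℝ, |t| ≤ (k : ℝ) ^ ((2 : ℝ)/3) →
      ‖Complex.Gamma ((k : ℂ) - 1/2 + t * Complex.I)‖ / Real.Gamma (k : ℝ)
        ≤ C * Real.exp (-t^2 / (2 * (k : ℝ))) * (k : ℝ) ^ (-(1 : ℝ)/2) := by
  refine ⟨Real.exp 1 * √2, by positivity, fun k hk t ht => ?_⟩
  have hk : (12 : ℝ) ≤ k := by exact_mod_cast hk
  have hz : (k : ℂ) - 1 / 2 + t * I = ((k - 1 / 2 : ℝ) : ℂ) + t * I := by push_cast; ring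
  have ht4 : t ^ 4 ≤ (k - 1 / 2) ^ 2 * (k - 1 / 2 - 1) :=
    (pow_four_le_of_abs_le_rpow (by linarith) ht).trans (by nlinarith)
  have hexp : Real.exp (1 - t ^ 2 / (2 * (k - 1 / 2))) ≤
      Real.exp 1 * Real.exp (-t ^ 2 / (2 * k)) := by
    have : t ^ 2 / (2 * k) ≤ t ^ 2 / (2 * (k - 1 / 2)) := by gcongr <;> linarith
    rw [← Real.exp_add, Real.exp_le_exp, neg_div]
    linarith
  rw [hz, div_le_iff₀ (Real.Gamma_pos_of_pos (by linarith))]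
  calc ‖Gamma (((k - 1 / 2 : ℝ) : ℂ) + t * I)‖
      ≤ Real.Gamma (k - 1 / 2) * Real.exp (1 - t ^ 2 / (2 * (k - 1 / 2))) :=
        norm_Gamma_add_mul_I_le (by linarith) ht4
    _ ≤ Real.Gamma k / √(k - 1) * (Real.exp 1 * Real.exp (-t ^ 2 / (2 * k))) := by
        gcongr
        exact Real.Gamma_sub_half_le (by linarith)
    _ ≤ Real.Gamma k * (Real.exp 1 * Real.exp (-t ^ 2 / (2 * k))) *
          (√2 * (k : ℝ) ^ (-(1 : ℝ) / 2)) := by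
        rw [div_eq_mul_inv, mul_right_comm]
        gcongr
        exact inv_sqrt_sub_one_le (by linarith)
    _ = _ := by ring
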